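/- The function G attains its minimum over S (i.e., there exists x̄ ∈ S with G(x̄) ≤ G(x) for all x ∈ S) under either of the following assumptions: (i) there exists α > 0 such that N(I,J,α) is nonempty and precompact (has compact closure); (ii) X is a reflexive Banach space, S and Θ_j for every j ∈ J are weakly closed, and there exists α > 0 such that N(I,J,α) is nonempty and bounded. -/

import Mathlib

open Set Pointwise Filter Topology Bornology Function

variable {X : Type*} [NormedAddCommGroup X] [NormedSpace ℝ X]

/-- The Minkowski gauge of `F`: `ρ_F(x) = inf {t ≥ 0 : x ∈ t • F}`. -/
noncomputable def rhoF (F : Set X) (x : X) : ℝ :=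
  sInf {t : ℝ | 0 ≤ t ∧ x ∈ t • F}

/-- The maximal time function `C_F(x; Q) = sup {ρ_F(q - x) : q ∈ Q}`. -/
noncomputable def maxTime (F Q : Set X) (x : X) : ℝ :=
  sSup ((fun q => rhoF F (q - x)) '' Q)

/-- The minimal time function `T_F(x; Θ) = inf {ρ_F(q - x) : q ∈ Θ}`. -/
noncomputable def minTime (F Θ : Set X) (x : X) : ℝ :=
  sInf ((fun q => rhoF F (q - x)) '' Θ)

/-- `G(x) = max {C_F(x; Ω_i), T_F(x; Θ_j) : i ∈ I, j ∈ J}`. -/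
noncomputable def GFun {ι κ : Type*} (F : Set X) (I : Finset ι) (J : Finset κ)
    (Ω : ι → Set X) (Θ : κ → Set X) (x : X) : ℝ :=
  sSup ((fun i => maxTime F (Ω i) x) '' ↑I ∪ (fun j => minTime F (Θ j) x) '' ↑J)

/-- `H(x) = Σ_{i∈I} C_F(x; Ω_i) + Σ_{j∈J} T_F(x; Θ_j)`. -/
noncomputable def HFun {ι κ : Type*} (F : Set X) (I : Finset ι) (J : Finset κ)
    (Ω : ι → Set X) (Θ : κ → Set X) (x : X) : ℝ :=
  ∑ i ∈ I, maxTime F (Ω i) x + ∑ j ∈ J, minTime F (Θ j) x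

/-- `N(I,J,α) = S ∩ [⋂_{i∈I} ⋂_{ω∈Ω_i} (ω - α•F)] ∩ [⋂_{j∈J} (Θ_j - α•F)]`. -/
def NSet {ι κ : Type*} (F : Set X) (I : Finset ι) (J : Finset κ)
    (Ω : ι → Set X) (Θ : κ → Set X) (S : Set X) (α : ℝ) : Set X :=
  S ∩ (⋂ i ∈ I, ⋂ ω ∈ Ω i, (({ω} : Set X) - α • F)) ∩ ⋂ j ∈ J, (Θ j - α • F)

/-- A set is weakly closed if it is closed in the weak topology on `Y`. -/
def WeaklyClosed (Y : Type*) [NormedAddCommGroup Y] [NormedSpace ℝ Y] (A : Set Y) : Prop :=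
  IsClosed (toWeakSpace ℝ Y '' A)

/-- A normed space is reflexive if the canonical embedding into its double dual is surjective. -/
def IsReflexiveSpace (Y : Type*) [NormedAddCommGroup Y] [NormedSpace ℝ Y] : Prop :=
  Function.Surjective (NormedSpace.inclusionInDoubleDual ℝ Y)

/-!
Every point of `S` with `G < α` lies in `N(I,J,α)`, and `G ≤ α` on `N(I,J,α)`. Hence a minimiser
of `G` over any `K` with `N(I,J,α) ⊆ K ⊆ S ∩ {G ≤ α}` minimises `G` over `S`. Take for `K` the
closure of `N(I,J,α)` in the norm topology in case (i) and in the weak topology in case (ii): it is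
compact, and `G` is lower semicontinuous for that topology. In case (i), `G` is even Lipschitz,
since `ρ_F` is a subadditive gauge dominated by a multiple of the norm. In case (ii), bounded sets
have weakly compact closure, and the sublevel sets of `G` are weakly closed:
`{T_F(·; Θ) ≤ c} = ⋂_{ε > 0} (Θ - (c + ε) • F)` is an intersection of sums of a weakly closed and a
weakly compact set, and `C_F(·; Ω) ≤ c` means `T_F(·; {ω}) ≤ c` for all `ω ∈ Ω`.
-/

theorem exists_forall_le_of_sublevel_sandwich {Y β : Type*} [TopologicalSpace Y] [LinearOrder β]
    [TopologicalSpace β] [ClosedIicTopology β] {f : Y → β} (hf : LowerSemicontinuous f)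
    {S N : Set Y} {a : β} (hS : IsClosed S) (hN : N.Nonempty) (hNc : IsCompact (closure N))
    (hNS : N ⊆ S ∩ {y | f y ≤ a}) (hSN : S ∩ {y | f y < a} ⊆ N) :
    ∃ x ∈ S, ∀ y ∈ S, f x ≤ f y := by
  have hK : closure N ⊆ S ∩ {y | f y ≤ a} :=
    closure_minimal hNS (hS.inter (hf.isClosed_preimage a))
  obtain ⟨x, hx, hmin⟩ := (hf.lowerSemicontinuousOn _).exists_isMinOn hN.closure hNc
  refine ⟨x, (hK hx).1, fun y hy => ?_⟩
  by_cases hya : f y < a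
  · exact hmin (subset_closure (hSN ⟨hy, hya⟩))
  · exact (hK hx).2.trans (not_lt.1 hya)

theorem mem_sub_iff_exists_sub_mem {G : Type*} [AddCommGroup G] {s t : Set G} {x : G} :
    x ∈ s - t ↔ ∃ a ∈ s, a - x ∈ t := by
  refine ⟨?_, fun ⟨a, ha, hax⟩ => ⟨a, ha, a - x, hax, sub_sub_cancel a x⟩⟩
  rintro ⟨a, ha, b, hb, rfl⟩
  exact ⟨a, ha, by simpa using hb⟩

section Gauge

variable {F : Set X}

theorem rhoF_eq_gauge (h0 : (0 : X) ∈ F) : rhoF F = gauge F := by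
  funext x
  rcases eq_or_ne x 0 with rfl | hx
  · rw [gauge_zero, rhoF]
    have hmem : (0 : ℝ) ∈ {t : ℝ | 0 ≤ t ∧ (0 : X) ∈ t • F} :=
      ⟨le_rfl, by rw [zero_smul_set ⟨0, h0⟩]; rfl⟩
    exact le_antisymm (csInf_le ⟨0, fun t ht => ht.1⟩ hmem) (le_csInf ⟨0, hmem⟩ fun t ht => ht.1)
  · rw [rhoF, gauge]
    congr 1
    ext t
    refine and_congr_left fun htF => ⟨fun ht => ht.lt_of_ne' fun ht0 => hx ?_, le_of_lt⟩
    rwa [ht0, zero_smul_set ⟨0, h0⟩] at htF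

theorem mem_smul_of_gauge_lt (hFconv : Convex ℝ F) (hF : F ∈ 𝓝 0) {c : ℝ} {y : X}
    (h : gauge F y < c) : y ∈ c • F := by
  have hc : 0 < c := (gauge_nonneg y).trans_lt h
  rw [mem_smul_set_iff_inv_smul_mem₀ hc.ne']
  refine interior_subset ((gauge_lt_one_iff_mem_interior hFconv hF).1 ?_)
  rwa [gauge_smul_of_nonneg (inv_nonneg.2 hc.le), smul_eq_mul, inv_mul_lt_one₀ hc]

theorem gauge_sub_le_add (hFconv : Convex ℝ F) (hF : F ∈ 𝓝 0) (a b c : X) :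
    gauge F (a - c) ≤ gauge F (a - b) + gauge F (b - c) := by
  simpa using gauge_add_le hFconv (absorbent_nhds_zero hF) (a - b) (b - c)

end Gauge

section TimeFunctions

variable {F Q Θ : Set X} {x y q : X} {c : ℝ}

theorem maxTime_eq_sSup_gauge (h0 : (0 : X) ∈ F) (x : X) :
    maxTime F Q x = sSup ((fun q => gauge F (q - x)) '' Q) := by
  rw [maxTime, rhoF_eq_gauge h0]

theorem minTime_eq_sInf_gauge (h0 : (0 : X) ∈ F) (x : X) :
    minTime F Θ x = sInf ((fun q => gauge F (q - x)) '' Θ) := by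
  rw [minTime, rhoF_eq_gauge h0]

theorem maxTime_nonneg (h0 : (0 : X) ∈ F) : 0 ≤ maxTime F Q x := by
  rw [maxTime_eq_sSup_gauge h0]
  exact Real.sSup_nonneg (by rintro _ ⟨q, -, rfl⟩; exact gauge_nonneg _)

theorem minTime_nonneg (h0 : (0 : X) ∈ F) : 0 ≤ minTime F Θ x := by
  rw [minTime_eq_sInf_gauge h0]
  exact Real.sInf_nonneg (by rintro _ ⟨q, -, rfl⟩; exact gauge_nonneg _)

theorem gauge_sub_le_maxTime (hFconv : Convex ℝ F) (hF : F ∈ 𝓝 0) (hQ : IsBounded Q)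
    (hq : q ∈ Q) : gauge F (q - x) ≤ maxTime F Q x := by
  obtain ⟨K, hK⟩ := hFconv.lipschitz_gauge hF
  have hbdd : BddAbove ((fun q => gauge F (q - x)) '' Q) :=
    ((hK.comp (IsometryEquiv.subRight x).isometry.lipschitz).isBounded_image hQ).bddAbove
  rw [maxTime_eq_sSup_gauge (mem_of_mem_nhds hF)]
  exact le_csSup hbdd ⟨q, hq, rfl⟩

theorem maxTime_le (h0 : (0 : X) ∈ F) (hc : 0 ≤ c) (h : ∀ ω ∈ Q, gauge F (ω - x) ≤ c) :
    maxTime F Q x ≤ c := by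
  rw [maxTime_eq_sSup_gauge h0]
  exact Real.sSup_le (by rintro _ ⟨q, hq, rfl⟩; exact h q hq) hc

theorem minTime_le_gauge_sub (h0 : (0 : X) ∈ F) (hq : q ∈ Θ) :
    minTime F Θ x ≤ gauge F (q - x) := by
  rw [minTime_eq_sInf_gauge h0]
  exact csInf_le ⟨0, by rintro _ ⟨q, -, rfl⟩; exact gauge_nonneg _⟩ ⟨q, hq, rfl⟩

theorem minTime_singleton (h0 : (0 : X) ∈ F) : minTime F {q} x = gauge F (q - x) := by
  rw [minTime_eq_sInf_gauge h0, image_singleton, csInf_singleton]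

theorem exists_gauge_sub_lt_of_minTime_lt (h0 : (0 : X) ∈ F) (hΘ : Θ.Nonempty)
    (h : minTime F Θ x < c) : ∃ q ∈ Θ, gauge F (q - x) < c := by
  rw [minTime_eq_sInf_gauge h0] at h
  obtain ⟨_, ⟨q, hq, rfl⟩, hlt⟩ := exists_lt_of_csInf_lt (hΘ.image _) h
  exact ⟨q, hq, hlt⟩

theorem maxTime_le_iff (hFconv : Convex ℝ F) (hF : F ∈ 𝓝 0) (hQ : IsBounded Q) (hc : 0 ≤ c) :
    maxTime F Q x ≤ c ↔ ∀ ω ∈ Q, gauge F (ω - x) ≤ c :=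
  ⟨fun h _ hω => (gauge_sub_le_maxTime hFconv hF hQ hω).trans h,
    maxTime_le (mem_of_mem_nhds hF) hc⟩

theorem minTime_le_iff (hFconv : Convex ℝ F) (hF : F ∈ 𝓝 0) (hΘ : Θ.Nonempty) (hc : 0 ≤ c) :
    minTime F Θ x ≤ c ↔ ∀ ε > 0, x ∈ Θ - (c + ε) • F := by
  have h0 : (0 : X) ∈ F := mem_of_mem_nhds hF
  simp only [mem_sub_iff_exists_sub_mem]
  refine ⟨fun h ε hε => ?_, fun h => le_of_forall_pos_le_add fun ε hε => ?_⟩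
  · obtain ⟨q, hq, hlt⟩ :=
      exists_gauge_sub_lt_of_minTime_lt h0 hΘ (h.trans_lt (lt_add_of_pos_right c hε))
    exact ⟨q, hq, mem_smul_of_gauge_lt hFconv hF hlt⟩
  · obtain ⟨q, hq, hmem⟩ := h ε hε
    exact (minTime_le_gauge_sub h0 hq).trans (gauge_le_of_mem (by positivity) hmem)

theorem maxTime_le_add (hFconv : Convex ℝ F) (hF : F ∈ 𝓝 0) (hQ : IsBounded Q) (x y : X) :
    maxTime F Q x ≤ maxTime F Q y + gauge F (y - x) := by
  have h0 : (0 : X) ∈ F := mem_of_mem_nhds hF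
  refine maxTime_le h0 (add_nonneg (maxTime_nonneg h0) (gauge_nonneg _)) fun q hq => ?_
  linarith [gauge_sub_le_add hFconv hF q y x, gauge_sub_le_maxTime hFconv hF hQ hq (x := y)]

theorem minTime_le_add (hFconv : Convex ℝ F) (hF : F ∈ 𝓝 0) (hΘ : Θ.Nonempty) (x y : X) :
    minTime F Θ x ≤ minTime F Θ y + gauge F (y - x) := by
  have h0 : (0 : X) ∈ F := mem_of_mem_nhds hF
  rw [← sub_le_iff_le_add, minTime_eq_sInf_gauge h0 y]
  refine le_csInf (hΘ.image _) ?_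
  rintro _ ⟨q, hq, rfl⟩
  linarith [minTime_le_gauge_sub h0 hq (x := x), gauge_sub_le_add hFconv hF q y x]

end TimeFunctions

section GFunction

variable {ι κ : Type*} {F : Set X} {I : Finset ι} {J : Finset κ} {Ω : ι → Set X}
  {Θ : κ → Set X} {S : Set X} {x : X} {c α : ℝ}

theorem maxTime_le_GFun {i : ι} (hi : i ∈ I) : maxTime F (Ω i) x ≤ GFun F I J Ω Θ x :=
  le_csSup ((I.finite_toSet.image _).union (J.finite_toSet.image _)).bddAbove
    (mem_union_left _ ⟨i, hi, rfl⟩)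

theorem minTime_le_GFun {j : κ} (hj : j ∈ J) : minTime F (Θ j) x ≤ GFun F I J Ω Θ x :=
  le_csSup ((I.finite_toSet.image _).union (J.finite_toSet.image _)).bddAbove
    (mem_union_right _ ⟨j, hj, rfl⟩)

theorem GFun_le_iff (hc : 0 ≤ c) : GFun F I J Ω Θ x ≤ c ↔
    (∀ i ∈ I, maxTime F (Ω i) x ≤ c) ∧ ∀ j ∈ J, minTime F (Θ j) x ≤ c := by
  refine ⟨fun h => ⟨fun i hi => (maxTime_le_GFun hi).trans h,
    fun j hj => (minTime_le_GFun hj).trans h⟩, fun ⟨hmax, hmin⟩ => Real.sSup_le ?_ hc⟩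
  rintro _ (⟨i, hi, rfl⟩ | ⟨j, hj, rfl⟩)
  exacts [hmax i hi, hmin j hj]

theorem GFun_nonneg (h0 : (0 : X) ∈ F) : 0 ≤ GFun F I J Ω Θ x := by
  refine Real.sSup_nonneg ?_
  rintro _ (⟨i, -, rfl⟩ | ⟨j, -, rfl⟩)
  exacts [maxTime_nonneg h0, minTime_nonneg h0]

theorem GFun_le_add (hFconv : Convex ℝ F) (hF : F ∈ 𝓝 0) (hΩb : ∀ i ∈ I, IsBounded (Ω i))
    (hΘne : ∀ j ∈ J, (Θ j).Nonempty) (x y : X) :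
    GFun F I J Ω Θ x ≤ GFun F I J Ω Θ y + gauge F (y - x) := by
  refine (GFun_le_iff (add_nonneg (GFun_nonneg (mem_of_mem_nhds hF)) (gauge_nonneg _))).2
    ⟨fun i hi => ?_, fun j hj => ?_⟩
  · exact (maxTime_le_add hFconv hF (hΩb i hi) x y).trans (by gcongr; exact maxTime_le_GFun hi)
  · exact (minTime_le_add hFconv hF (hΘne j hj) x y).trans (by gcongr; exact minTime_le_GFun hj)

theorem continuous_GFun (hFconv : Convex ℝ F) (hF : F ∈ 𝓝 0) (hΩb : ∀ i ∈ I, IsBounded (Ω i))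
    (hΘne : ∀ j ∈ J, (Θ j).Nonempty) : Continuous (GFun F I J Ω Θ) := by
  obtain ⟨K, hK⟩ := hFconv.lipschitz_gauge hF
  refine (LipschitzWith.of_le_add_mul K fun x y =>
    (GFun_le_add hFconv hF hΩb hΘne x y).trans ?_).continuous
  have h := hK.dist_le_mul (y - x) 0
  rw [gauge_zero, Real.dist_eq, sub_zero, abs_of_nonneg (gauge_nonneg _), dist_zero_right,
    ← dist_eq_norm, dist_comm] at h
  linarith

theorem mem_NSet_iff : x ∈ NSet F I J Ω Θ S α ↔ x ∈ S ∧
    (∀ i ∈ I, ∀ ω ∈ Ω i, ω - x ∈ α • F) ∧ ∀ j ∈ J, ∃ θ ∈ Θ j, θ - x ∈ α • F := by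
  simp only [NSet, mem_inter_iff, mem_iInter, mem_sub_iff_exists_sub_mem, mem_singleton_iff,
    exists_eq_left, and_assoc]

theorem GFun_le_of_mem_NSet (h0 : (0 : X) ∈ F) (hα : 0 ≤ α) (hx : x ∈ NSet F I J Ω Θ S α) :
    GFun F I J Ω Θ x ≤ α := by
  obtain ⟨-, hΩ, hΘ⟩ := mem_NSet_iff.1 hx
  refine (GFun_le_iff hα).2 ⟨fun i hi => maxTime_le h0 hα fun ω hω => ?_, fun j hj => ?_⟩
  · exact gauge_le_of_mem hα (hΩ i hi ω hω)
  · obtain ⟨θ, hθ, hmem⟩ := hΘ j hj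
    exact (minTime_le_gauge_sub h0 hθ).trans (gauge_le_of_mem hα hmem)

theorem mem_NSet_of_GFun_lt (hFconv : Convex ℝ F) (hF : F ∈ 𝓝 0)
    (hΩb : ∀ i ∈ I, IsBounded (Ω i)) (hΘne : ∀ j ∈ J, (Θ j).Nonempty) (hxS : x ∈ S)
    (hx : GFun F I J Ω Θ x < α) : x ∈ NSet F I J Ω Θ S α := by
  refine mem_NSet_iff.2 ⟨hxS, fun i hi ω hω => mem_smul_of_gauge_lt hFconv hF ?_, fun j hj => ?_⟩
  · exact ((gauge_sub_le_maxTime hFconv hF (hΩb i hi) hω).trans (maxTime_le_GFun hi)).trans_lt hx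
  · obtain ⟨θ, hθ, hlt⟩ := exists_gauge_sub_lt_of_minTime_lt (mem_of_mem_nhds hF) (hΘne j hj)
      ((minTime_le_GFun hj).trans_lt hx)
    exact ⟨θ, hθ, mem_smul_of_gauge_lt hFconv hF hlt⟩

end GFunction

section Weak

variable {A B : Set X}

theorem weaklyClosed_iff_isClosed_preimage :
    WeaklyClosed X A ↔ IsClosed ((toWeakSpace ℝ X).symm ⁻¹' A) := by
  rw [WeaklyClosed, LinearEquiv.image_eq_preimage_symm]

theorem weaklyClosed_iInter {ι : Sort*} {A : ι → Set X} (h : ∀ i, WeaklyClosed X (A i)) :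
    WeaklyClosed X (⋂ i, A i) := by
  simp only [weaklyClosed_iff_isClosed_preimage, preimage_iInter] at h ⊢
  exact isClosed_iInter h

theorem WeaklyClosed.inter (hA : WeaklyClosed X A) (hB : WeaklyClosed X B) :
    WeaklyClosed X (A ∩ B) := by
  rw [weaklyClosed_iff_isClosed_preimage] at *
  exact hA.inter hB

theorem Convex.weaklyClosed (hA : Convex ℝ A) (hAc : IsClosed A) : WeaklyClosed X A := by
  rw [WeaklyClosed, ← hAc.closure_eq, hA.toWeakSpace_closure ℝ]
  exact isClosed_closure

theorem WeaklyClosed.sub_of_isCompact (hA : WeaklyClosed X A)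
    (hB : IsCompact (toWeakSpace ℝ X '' B)) : WeaklyClosed X (A - B) := by
  rw [WeaklyClosed, image_sub, sub_eq_add_neg, add_comm]
  exact IsClosed.add_left_of_isCompact hA hB.neg

theorem IsReflexiveSpace.isCompact_closure (hX : IsReflexiveSpace X) {A : Set (WeakSpace ℝ X)}
    (hA : IsBounded (toWeakSpace ℝ X ⁻¹' A)) : IsCompact (closure A) := by
  refine NormedSpace.isCompact_closure_of_isBounded ℝ X A hA fun φ _ => ?_
  obtain ⟨x, hx⟩ := hX (StrongDual.toWeakDual.symm φ)
  refine ⟨toWeakSpace ℝ X x, ?_⟩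
  rw [NormedSpace.inclusionInDoubleDualWeak_apply, LinearEquiv.symm_apply_apply, hx,
    LinearEquiv.apply_symm_apply]

theorem IsReflexiveSpace.isCompact_toWeakSpace_image (hX : IsReflexiveSpace X)
    (hA : Convex ℝ A) (hAc : IsClosed A) (hAb : IsBounded A) :
    IsCompact (toWeakSpace ℝ X '' A) := by
  rw [← IsClosed.closure_eq (hA.weaklyClosed hAc)]
  exact hX.isCompact_closure (by rwa [preimage_image_eq _ (toWeakSpace ℝ X).injective])

theorem IsReflexiveSpace.exists_forall_le_of_sublevel_sandwich (hX : IsReflexiveSpace X)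
    {f : X → ℝ} (hf : ∀ c, WeaklyClosed X {x | f x ≤ c}) {S N : Set X} {a : ℝ}
    (hS : WeaklyClosed X S) (hN : N.Nonempty) (hNb : IsBounded N)
    (hNS : N ⊆ S ∩ {x | f x ≤ a}) (hSN : S ∩ {x | f x < a} ⊆ N) :
    ∃ x ∈ S, ∀ y ∈ S, f x ≤ f y := by
  have hlsc : LowerSemicontinuous (f ∘ (toWeakSpace ℝ X).symm) :=
    lowerSemicontinuous_iff_isClosed_preimage.2 fun c => weaklyClosed_iff_isClosed_preimage.1 (hf c)
  obtain ⟨x', hx', hmin⟩ := _root_.exists_forall_le_of_sublevel_sandwich hlsc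
    (weaklyClosed_iff_isClosed_preimage.1 hS) (hN.preimage (toWeakSpace ℝ X).symm.surjective)
    (hX.isCompact_closure (by simpa [preimage_preimage] using hNb))
    (preimage_mono hNS) (preimage_mono hSN)
  refine ⟨(toWeakSpace ℝ X).symm x', hx', fun y hy => ?_⟩
  simpa using hmin (toWeakSpace ℝ X y) (by simpa using hy)

theorem weaklyClosed_setOf_minTime_le (hX : IsReflexiveSpace X) {F Θ : Set X} (hFc : IsClosed F)
    (hFb : IsBounded F) (hFconv : Convex ℝ F) (hF : F ∈ 𝓝 0) (hΘ : Θ.Nonempty)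
    (hΘw : WeaklyClosed X Θ) {c : ℝ} (hc : 0 ≤ c) : WeaklyClosed X {x | minTime F Θ x ≤ c} := by
  have hsub : {x | minTime F Θ x ≤ c} = ⋂ ε > 0, Θ - (c + ε) • F := by
    ext x
    simp only [mem_ofPred_eq, mem_iInter, minTime_le_iff hFconv hF hΘ hc]
  rw [hsub]
  refine weaklyClosed_iInter fun ε => weaklyClosed_iInter fun hε => hΘw.sub_of_isCompact ?_
  have hcε : c + ε ≠ 0 := by positivity
  exact hX.isCompact_toWeakSpace_image (hFconv.smul _) (hFc.smul_of_ne_zero hcε) (hFb.smul₀ _)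

theorem weaklyClosed_setOf_GFun_le {ι κ : Type*} (hX : IsReflexiveSpace X) {F : Set X}
    {I : Finset ι} {J : Finset κ} {Ω : ι → Set X} {Θ : κ → Set X} (hFc : IsClosed F)
    (hFb : IsBounded F) (hFconv : Convex ℝ F) (hF : F ∈ 𝓝 0) (hΩb : ∀ i ∈ I, IsBounded (Ω i))
    (hΘne : ∀ j ∈ J, (Θ j).Nonempty) (hΘw : ∀ j ∈ J, WeaklyClosed X (Θ j)) (c : ℝ) :
    WeaklyClosed X {x | GFun F I J Ω Θ x ≤ c} := by
  rcases lt_or_ge c 0 with hc | hc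
  · have hempty : {x | GFun F I J Ω Θ x ≤ c} = ∅ :=
      eq_empty_of_forall_notMem fun x hx =>
        (GFun_nonneg (mem_of_mem_nhds hF)).not_gt (hx.trans_lt hc)
    rw [hempty]
    exact convex_empty.weaklyClosed isClosed_empty
  have hsub : {x | GFun F I J Ω Θ x ≤ c} =
      (⋂ i ∈ I, ⋂ ω ∈ Ω i, {x | minTime F {ω} x ≤ c}) ∩ ⋂ j ∈ J, {x | minTime F (Θ j) x ≤ c} := by
    ext x
    simp only [mem_ofPred_eq, mem_inter_iff, mem_iInter, GFun_le_iff hc,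
      minTime_singleton (mem_of_mem_nhds hF)]
    exact and_congr_left' (forall₂_congr fun i hi => maxTime_le_iff hFconv hF (hΩb i hi) hc)
  rw [hsub]
  refine WeaklyClosed.inter (weaklyClosed_iInter fun i => weaklyClosed_iInter fun hi =>
    weaklyClosed_iInter fun ω => weaklyClosed_iInter fun _ => ?_)
    (weaklyClosed_iInter fun j => weaklyClosed_iInter fun hj =>
      weaklyClosed_setOf_minTime_le hX hFc hFb hFconv hF (hΘne j hj) (hΘw j hj) hc)
  exact weaklyClosed_setOf_minTime_le hX hFc hFb hFconv hF (singleton_nonempty ω)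
    ((convex_singleton ω).weaklyClosed isClosed_singleton) hc

end Weak

theorem stmt2_general
    {ι κ : Type*} (F : Set X) (I : Finset ι) (J : Finset κ)
    (Ω : ι → Set X) (Θ : κ → Set X) (S : Set X)
    (hFc : IsClosed F) (hFb : IsBounded F) (hFconv : Convex ℝ F)
    (hF0 : (0 : X) ∈ interior F)
    (hΩb : ∀ i ∈ I, IsBounded (Ω i))
    (hΘne : ∀ j ∈ J, (Θ j).Nonempty)
    (hSc : IsClosed S)
    (hyp :
      (∃ α > (0 : ℝ), (NSet F I J Ω Θ S α).Nonempty ∧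
        IsCompact (closure (NSet F I J Ω Θ S α))) ∨
      (CompleteSpace X ∧ IsReflexiveSpace X ∧ WeaklyClosed X S ∧
        (∀ j ∈ J, WeaklyClosed X (Θ j)) ∧
        ∃ α > (0 : ℝ), (NSet F I J Ω Θ S α).Nonempty ∧
          IsBounded (NSet F I J Ω Θ S α))) :
    ∃ xbar ∈ S, ∀ x ∈ S, GFun F I J Ω Θ xbar ≤ GFun F I J Ω Θ x := by
  have hF : F ∈ 𝓝 0 := mem_interior_iff_mem_nhds.1 hF0
  have hNS (α : ℝ) (hα : 0 < α) : NSet F I J Ω Θ S α ⊆ S ∩ {x | GFun F I J Ω Θ x ≤ α} :=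
    fun x hx => ⟨(mem_NSet_iff.1 hx).1, GFun_le_of_mem_NSet (mem_of_mem_nhds hF) hα.le hx⟩
  have hSN (α : ℝ) : S ∩ {x | GFun F I J Ω Θ x < α} ⊆ NSet F I J Ω Θ S α :=
    fun x hx => mem_NSet_of_GFun_lt hFconv hF hΩb hΘne hx.1 hx.2
  rcases hyp with ⟨α, hα, hN, hNc⟩ | ⟨-, hX, hSw, hΘw, α, hα, hN, hNb⟩
  · exact exists_forall_le_of_sublevel_sandwich
      (continuous_GFun hFconv hF hΩb hΘne).lowerSemicontinuous hSc hN hNc (hNS α hα) (hSN α)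
  · exact hX.exists_forall_le_of_sublevel_sandwich
      (weaklyClosed_setOf_GFun_le hX hFc hFb hFconv hF hΩb hΘne hΘw) hSw hN hNb (hNS α hα) (hSN α)

/-- Proposition 2.3. -/
theorem stmt2
    {ι κ : Type*} (F : Set X) (I : Finset ι) (J : Finset κ)
    (Ω : ι → Set X) (Θ : κ → Set X) (S : Set X)
    (hFc : IsClosed F) (hFb : IsBounded F) (hFconv : Convex ℝ F)
    (hF0 : (0 : X) ∈ interior F)
    (hΩne : ∀ i ∈ I, (Ω i).Nonempty) (hΩc : ∀ i ∈ I, IsClosed (Ω i))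
    (hΩb : ∀ i ∈ I, IsBounded (Ω i))
    (hΘne : ∀ j ∈ J, (Θ j).Nonempty) (hΘc : ∀ j ∈ J, IsClosed (Θ j))
    (hSne : S.Nonempty) (hSc : IsClosed S)
    (hIJ : I.Nonempty ∨ J.Nonempty)
    (hyp :
      (∃ α > (0 : ℝ), (NSet F I J Ω Θ S α).Nonempty ∧
        IsCompact (closure (NSet F I J Ω Θ S α))) ∨
      (CompleteSpace X ∧ IsReflexiveSpace X ∧ WeaklyClosed X S ∧
        (∀ j ∈ J, WeaklyClosed X (Θ j)) ∧
        ∃ α > (0 : ℝ), (NSet F I J Ω Θ S α).Nonempty ∧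
          IsBounded (NSet F I J Ω Θ S α))) :
    ∃ xbar ∈ S, ∀ x ∈ S, GFun F I J Ω Θ xbar ≤ GFun F I J Ω Θ x :=
  stmt2_general F I J Ω Θ S hFc hFb hFconv hF0 hΩb hΘne hSc hyp
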